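/- For fixed m₀ and m₁, every face sequence appears in exactly one pair of the matching V, and in every pair (S, S′) of V with S a face sequence of type 1, 3, 5, 7 or 9, S is a codimension-1 face of S′; hence V is a complete matching (a discrete vector field in which every face of J(n,k), together with the empty face, is matched). -/

import Mathlib

set_option linter.unusedVariables false

/-- The alphabet `{0, 1, ∗}` for face sequences. -/
inductive Letter : Type
  | zero
  | one
  | star
  deriving DecidableEq

/-- A sequence of length `n` over the alphabet `{0, 1, ∗}`. -/
abbrev FSeq (n : ℕ) := Fin n → Letter

/-- `S(1)`, the number of `1`'s in `S`. -/
def count1 {n : ℕ} (S : FSeq n) : ℕ := (Finset.univ.filter fun i => S i = Letter.one).card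

/-- `S(0)`, the number of `0`'s in `S`. -/
def count0 {n : ℕ} (S : FSeq n) : ℕ := (Finset.univ.filter fun i => S i = Letter.zero).card

/-- The number of `∗`'s in `S`. -/
def countStar {n : ℕ} (S : FSeq n) : ℕ := (Finset.univ.filter fun i => S i = Letter.star).card

/-- A face sequence: either no `∗` and exactly `k` ones, or at most `k-1` ones and
(#ones) + (#stars) ≥ `k+1`. -/
def FaceSeq {n : ℕ} (k : ℕ) (S : FSeq n) : Prop :=
  (countStar S = 0 ∧ count1 S = k) ∨ (count1 S + 1 ≤ k ∧ k + 1 ≤ count1 S + countStar S)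

/-- `v₀`, the sequence of `k` ones followed by `n - k` zeros. -/
def v0seq (n k : ℕ) : FSeq n := fun i => if (i : ℕ) < k then Letter.one else Letter.zero

/-- `S` contains at least one `∗`. -/
def hasStar {n : ℕ} (S : FSeq n) : Prop := ∃ i, S i = Letter.star

/-- There is a `1` to the right of the rightmost `∗` (in particular `S` contains a `∗`). -/
def OneRight {n : ℕ} (S : FSeq n) : Prop :=
  hasStar S ∧ ∃ i, S i = Letter.one ∧ ∀ j, i < j → S j ≠ Letter.star

/-- There is no `1` to the right of the rightmost `∗` (and `S` contains a `∗`). -/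
def NoOneRight {n : ℕ} (S : FSeq n) : Prop :=
  hasStar S ∧ ∀ i, S i = Letter.one → ∃ j, i < j ∧ S j = Letter.star

/-- There is a `0` to the left of the leftmost `∗` (in particular `S` contains a `∗`). -/
def ZeroLeft {n : ℕ} (S : FSeq n) : Prop :=
  hasStar S ∧ ∃ i, S i = Letter.zero ∧ ∀ j, j < i → S j ≠ Letter.star

/-- There is no `0` to the left of the leftmost `∗` (and `S` contains a `∗`). -/
def NoZeroLeft {n : ℕ} (S : FSeq n) : Prop :=
  hasStar S ∧ ∀ i, S i = Letter.zero → ∃ j, j < i ∧ S j = Letter.star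

/-- `i` is the position of the rightmost `1` of `S`. -/
def IsRightmostOne {n : ℕ} (S : FSeq n) (i : Fin n) : Prop :=
  S i = Letter.one ∧ ∀ j, i < j → S j ≠ Letter.one

/-- `i` is the position of the rightmost `∗` of `S`. -/
def IsRightmostStar {n : ℕ} (S : FSeq n) (i : Fin n) : Prop :=
  S i = Letter.star ∧ ∀ j, i < j → S j ≠ Letter.star

/-- `i` is the position of the leftmost `0` of `S`. -/
def IsLeftmostZero {n : ℕ} (S : FSeq n) (i : Fin n) : Prop :=
  S i = Letter.zero ∧ ∀ j, j < i → S j ≠ Letter.zero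

/-- `i` is the position of the leftmost `∗` of `S`. -/
def IsLeftmostStar {n : ℕ} (S : FSeq n) (i : Fin n) : Prop :=
  S i = Letter.star ∧ ∀ j, j < i → S j ≠ Letter.star

/-- Condition of rule (1), subcondition (a). -/
def Cond1a {n : ℕ} (k m0 m1 : ℕ) (S : FSeq n) : Prop :=
  count1 S + 1 ≤ k ∧ OneRight S ∧ count1 S ≠ m1

/-- Condition of rule (1), subcondition (b). -/
def Cond1b {n : ℕ} (k m0 m1 : ℕ) (S : FSeq n) : Prop :=
  count1 S + 1 ≤ k ∧ OneRight S ∧ count1 S = m1 ∧ m0 < count0 S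

/-- Condition of rule (1), subcondition (c): no `0` to the left of the leftmost `∗`. -/
def Cond1c {n : ℕ} (k m0 m1 : ℕ) (S : FSeq n) : Prop :=
  count1 S + 1 ≤ k ∧ OneRight S ∧ count1 S = m1 ∧ count0 S = m0 ∧ NoZeroLeft S

/-- Condition of rule (2), subcondition (a): here `count1 S + 1 ≠ m1` encodes `S(1) ≠ m₁ - 1`. -/
def Cond2a {n : ℕ} (k m0 m1 : ℕ) (S : FSeq n) : Prop :=
  count1 S + 2 ≤ k ∧ NoOneRight S ∧ count1 S + 1 ≠ m1

/-- Condition of rule (2), subcondition (b). -/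
def Cond2b {n : ℕ} (k m0 m1 : ℕ) (S : FSeq n) : Prop :=
  count1 S + 2 ≤ k ∧ NoOneRight S ∧ count1 S + 1 = m1 ∧ m0 < count0 S

/-- Condition of rule (2), subcondition (c). -/
def Cond2c {n : ℕ} (k m0 m1 : ℕ) (S : FSeq n) : Prop :=
  count1 S + 2 ≤ k ∧ NoOneRight S ∧ count1 S + 1 = m1 ∧ count0 S = m0 ∧ NoZeroLeft S

/-- `S` is of type 1 (satisfies the condition of rule (1)). -/
def Type1 {n : ℕ} (k m0 m1 : ℕ) (S : FSeq n) : Prop :=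
  Cond1a k m0 m1 S ∨ Cond1b k m0 m1 S ∨ Cond1c k m0 m1 S

/-- `S` is of type 2 (satisfies the condition of rule (2)). -/
def Type2 {n : ℕ} (k m0 m1 : ℕ) (S : FSeq n) : Prop :=
  Cond2a k m0 m1 S ∨ Cond2b k m0 m1 S ∨ Cond2c k m0 m1 S

/-- `S` is of type 3: `S(1) = k-1`, `S(0) ≤ n-k-1`, no `1` right of the rightmost `∗`,
a `0` left of the leftmost `∗`. -/
def Type3 {n : ℕ} (k : ℕ) (S : FSeq n) : Prop :=
  count1 S + 1 = k ∧ count0 S + k + 1 ≤ n ∧ NoOneRight S ∧ ZeroLeft S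

/-- `S` is of type 4: `S(1) = k-1`, `S(0) ≤ n-k-2`, no `1` right of the rightmost `∗`,
no `0` left of the leftmost `∗`. -/
def Type4 {n : ℕ} (k : ℕ) (S : FSeq n) : Prop :=
  count1 S + 1 = k ∧ count0 S + k + 2 ≤ n ∧ NoOneRight S ∧ NoZeroLeft S

/-- `S` is of type 5: `S(1) = m₁`, `S(0) ≤ m₀`, a `1` right of the rightmost `∗`,
a `0` left of the leftmost `∗`. -/
def Type5 {n : ℕ} (m0 m1 : ℕ) (S : FSeq n) : Prop :=
  count1 S = m1 ∧ count0 S ≤ m0 ∧ OneRight S ∧ ZeroLeft S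

/-- `S` is of type 6: `S(1) = m₁`, `S(0) < m₀`, a `1` right of the rightmost `∗`,
no `0` left of the leftmost `∗`. -/
def Type6 {n : ℕ} (m0 m1 : ℕ) (S : FSeq n) : Prop :=
  count1 S = m1 ∧ count0 S < m0 ∧ OneRight S ∧ NoZeroLeft S

/-- `S` is of type 7: `S(1) = m₁-1`, `S(0) ≤ m₀`, no `1` right of the rightmost `∗`,
a `0` left of the leftmost `∗`. -/
def Type7 {n : ℕ} (m0 m1 : ℕ) (S : FSeq n) : Prop :=
  count1 S + 1 = m1 ∧ count0 S ≤ m0 ∧ NoOneRight S ∧ ZeroLeft S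

/-- `S` is of type 8: `S(1) = m₁-1`, `S(0) < m₀`, no `1` right of the rightmost `∗`,
no `0` left of the leftmost `∗`. -/
def Type8 {n : ℕ} (m0 m1 : ℕ) (S : FSeq n) : Prop :=
  count1 S + 1 = m1 ∧ count0 S < m0 ∧ NoOneRight S ∧ NoZeroLeft S

/-- `S` is of type 9: `S(1) = k`, `S(0) = n-k`, and `S ≠ v₀`. -/
def Type9 {n : ℕ} (k : ℕ) (S : FSeq n) : Prop :=
  count1 S = k ∧ count0 S + k = n ∧ S ≠ v0seq n k

/-- `S` is of type 10: `S(1) = k-1`, `S(0) = n-k-1`, no `1` right of the rightmost `∗`,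
no `0` left of the leftmost `∗`. -/
def Type10 {n : ℕ} (k : ℕ) (S : FSeq n) : Prop :=
  count1 S + 1 = k ∧ count0 S + k + 1 = n ∧ NoOneRight S ∧ NoZeroLeft S

/-- `S` is of type `i` for `1 ≤ i ≤ 10` (and of no type otherwise). -/
def OfType {n : ℕ} (k m0 m1 : ℕ) (i : ℕ) (S : FSeq n) : Prop :=
  match i with
  | 1 => Type1 k m0 m1 S
  | 2 => Type2 k m0 m1 S
  | 3 => Type3 k S
  | 4 => Type4 k S
  | 5 => Type5 m0 m1 S
  | 6 => Type6 m0 m1 S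
  | 7 => Type7 m0 m1 S
  | 8 => Type8 m0 m1 S
  | 9 => Type9 k S
  | 10 => Type10 k S
  | _ => False

/-- The replacement of rule (1): replace the rightmost `1` with `∗`. -/
def Apply1 {n : ℕ} (S S' : FSeq n) : Prop :=
  ∃ i, IsRightmostOne S i ∧ S' = Function.update S i Letter.star

/-- The replacement of rule (2): replace the rightmost `∗` with `1`. -/
def Apply2 {n : ℕ} (S S' : FSeq n) : Prop :=
  ∃ i, IsRightmostStar S i ∧ S' = Function.update S i Letter.one

/-- The replacement of rules (3), (5) and (7): replace the leftmost `0` with `∗`. -/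
def Apply3 {n : ℕ} (S S' : FSeq n) : Prop :=
  ∃ i, IsLeftmostZero S i ∧ S' = Function.update S i Letter.star

/-- The replacement of rules (4), (6) and (8): replace the leftmost `∗` with `0`. -/
def Apply4 {n : ℕ} (S S' : FSeq n) : Prop :=
  ∃ i, IsLeftmostStar S i ∧ S' = Function.update S i Letter.zero

/-- The replacement of rule (9): replace the leftmost `0` and the rightmost `1` each with `∗`. -/
def Apply9 {n : ℕ} (S S' : FSeq n) : Prop :=
  ∃ i j, IsLeftmostZero S i ∧ IsRightmostOne S j ∧
    S' = Function.update (Function.update S i Letter.star) j Letter.star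

/-- The replacement of rule (10): replace the leftmost `∗` with `0` and the other `∗` with `1`. -/
def Apply10 {n : ℕ} (S S' : FSeq n) : Prop :=
  ∃ i j, IsLeftmostStar S i ∧ IsRightmostStar S j ∧ i ≠ j ∧
    S' = Function.update (Function.update S i Letter.zero) j Letter.one

/-- The matching `V` on face sequences: a face sequence `S` of type 1, 3, 5, 7 or 9 is
matched with the result `S'` of applying the corresponding rule to it. -/
def Vmatch {n : ℕ} (k m0 m1 : ℕ) (S S' : FSeq n) : Prop :=
  FaceSeq k S ∧
    ((Type1 k m0 m1 S ∧ Apply1 S S') ∨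
     (Type3 k S ∧ Apply3 S S') ∨
     (Type5 m0 m1 S ∧ Apply3 S S') ∨
     (Type7 m0 m1 S ∧ Apply3 S S') ∨
     (Type9 k S ∧ Apply9 S S'))

/-- The vertex set of a face sequence `S`: the vertex sequences (0/1-sequences with
exactly `k` ones) agreeing with `S` wherever `S` is not `∗`. -/
def VertexSet {n : ℕ} (k : ℕ) (S : FSeq n) : Set (FSeq n) :=
  {v | (∀ i, v i ≠ Letter.star) ∧ count1 v = k ∧ ∀ i, S i ≠ Letter.star → v i = S i}

/-- The dimension of the face `F(S)`. -/
def fdim {n : ℕ} (S : FSeq n) : ℕ :=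
  if countStar S = 0 then 0 else countStar S - 1

/-- `T` is a codimension-1 face of `S`. -/
def Codim1 {n : ℕ} (k : ℕ) (T S : FSeq n) : Prop :=
  VertexSet k T ⊂ VertexSet k S ∧ fdim T + 1 = fdim S

/-- A (nontrivial) `V`-path `a₀, b₀, a₁, b₁, …, b_r, a_{r+1}` of face sequences. -/
structure VPath (n k m0 m1 r : ℕ) where
  a : Fin (r + 2) → FSeq n
  b : Fin (r + 1) → FSeq n
  face_a : ∀ i, FaceSeq k (a i)
  face_b : ∀ i, FaceSeq k (b i)
  mem : ∀ i : Fin (r + 1), Vmatch k m0 m1 (a i.castSucc) (b i)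
  codim_left : ∀ i : Fin (r + 1), Codim1 k (a i.castSucc) (b i)
  codim_right : ∀ i : Fin (r + 1), Codim1 k (a i.succ) (b i)
  step_ne : ∀ i : Fin (r + 1), a i.castSucc ≠ a i.succ

/-- The matching `V` extended to the poset of cells including the empty face `none`:
the empty face is matched with `v₀`, and otherwise pairs are given by `Vmatch`. -/
def VmatchE (n k m0 m1 : ℕ) : Option (FSeq n) → Option (FSeq n) → Prop
  | none, some S' => S' = v0seq n k
  | some S, some S' => Vmatch k m0 m1 S S'
  | _, _ => False
/-!
A face sequence other than `v₀` has exactly one of the ten types, read off by a decision tree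
on its letter counts and on where its `∗`s sit relative to its ones and zeros (`typeOf`). The
rule of an odd type `t` turns a sequence of type `t` into one of type `t + 1`, and the rule of
type `t + 1` undoes it; conversely every sequence of even type arises in this way. So a face lies
in exactly one pair of `V`, as first or second entry according to the parity of its type, and
`v₀`, which has no type, is left for the empty face. Each rule only turns letters into `∗`s, so
the vertex set can only grow; it grows strictly because every `∗` of a face can be filled with
either letter, and the number of `∗`s goes up by one (by two from a vertex to an edge).
-/

open Function Finset

section Extremal

variable {ι : Type*} [LinearOrder ι] {p : ι → Prop}

theorem exists_rightmost [Fintype ι] (h : ∃ i, p i) : ∃ i, p i ∧ ∀ j, i < j → ¬ p j := by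
  classical
  obtain ⟨i, hi, hmax⟩ := exists_max_image {j | p j} id (by simpa [Finset.Nonempty] using h)
  exact ⟨i, by simpa using hi, fun j hij hj => (hmax j (by simpa using hj)).not_gt hij⟩

theorem exists_leftmost [Fintype ι] (h : ∃ i, p i) : ∃ i, p i ∧ ∀ j, j < i → ¬ p j :=
  exists_rightmost (ι := ιᵒᵈ) h

theorem rightmost_unique {i i' : ι} (h : p i ∧ ∀ j, i < j → ¬ p j)
    (h' : p i' ∧ ∀ j, i' < j → ¬ p j) : i = i' :=
  le_antisymm (not_lt.1 fun hlt => h'.2 i hlt h.1) (not_lt.1 fun hlt => h.2 i' hlt h'.1)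

theorem leftmost_unique {i i' : ι} (h : p i ∧ ∀ j, j < i → ¬ p j)
    (h' : p i' ∧ ∀ j, j < i' → ¬ p j) : i = i' :=
  rightmost_unique (ι := ιᵒᵈ) h h'

end Extremal

theorem card_filter_update_add {α β : Type*} [Fintype α] [DecidableEq α] [DecidableEq β]
    (f : α → β) (i : α) (c a : β) :
    #{j | update f i c j = a} + (if f i = a then 1 else 0) =
      #{j | f j = a} + (if c = a then 1 else 0) := by
  simp only [card_filter]
  rw [← add_sum_erase _ _ (mem_univ i), ← add_sum_erase _ _ (mem_univ i)]
  rw [sum_congr rfl fun j hj => by rw [update_of_ne (ne_of_mem_erase hj)]]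
  simp only [update_self]
  omega

section Counting

variable {n : ℕ}

theorem counts_update (S : FSeq n) (i : Fin n) (c : Letter) :
    count0 (update S i c) + (if S i = .zero then 1 else 0) =
        count0 S + (if c = .zero then 1 else 0) ∧
      count1 (update S i c) + (if S i = .one then 1 else 0) =
        count1 S + (if c = .one then 1 else 0) ∧
      countStar (update S i c) + (if S i = .star then 1 else 0) =
        countStar S + (if c = .star then 1 else 0) :=
  ⟨card_filter_update_add S i c _, card_filter_update_add S i c _,
    card_filter_update_add S i c _⟩

theorem counts_update_star_of_eq_one {S : FSeq n} {i : Fin n} (h : S i = .one) :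
    count0 (update S i .star) = count0 S ∧ count1 (update S i .star) + 1 = count1 S ∧
      countStar (update S i .star) = countStar S + 1 := by
  simpa [h] using counts_update S i .star

theorem counts_update_star_of_eq_zero {S : FSeq n} {i : Fin n} (h : S i = .zero) :
    count0 (update S i .star) + 1 = count0 S ∧ count1 (update S i .star) = count1 S ∧
      countStar (update S i .star) = countStar S + 1 := by
  simpa [h] using counts_update S i .star

theorem counts_update_one_of_eq_star {S : FSeq n} {i : Fin n} (h : S i = .star) :
    count0 (update S i .one) = count0 S ∧ count1 (update S i .one) = count1 S + 1 ∧
      countStar (update S i .one) + 1 = countStar S := by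
  simpa [h] using counts_update S i .one

theorem counts_update_zero_of_eq_star {S : FSeq n} {i : Fin n} (h : S i = .star) :
    count0 (update S i .zero) = count0 S + 1 ∧ count1 (update S i .zero) = count1 S ∧
      countStar (update S i .zero) + 1 = countStar S := by
  simpa [h] using counts_update S i .zero

theorem count0_add_count1_add_countStar (S : FSeq n) : count0 S + count1 S + countStar S = n := by
  simp only [count0, count1, countStar, card_filter, ← sum_add_distrib]
  calc _ = ∑ _ : Fin n, 1 := sum_congr rfl fun i _ => by cases S i <;> rfl
    _ = n := by simp

theorem hasStar_iff_countStar_ne_zero {S : FSeq n} : hasStar S ↔ countStar S ≠ 0 := by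
  simp [hasStar, countStar, card_eq_zero, filter_eq_empty_iff]

end Counting

section Positions

variable {n : ℕ} {S : FSeq n} {i j : Fin n}

theorem IsRightmostOne.eq (h : IsRightmostOne S i) (h' : IsRightmostOne S j) : i = j :=
  rightmost_unique (p := (S · = .one)) h h'

theorem IsRightmostStar.eq (h : IsRightmostStar S i) (h' : IsRightmostStar S j) : i = j :=
  rightmost_unique (p := (S · = .star)) h h'

theorem IsLeftmostZero.eq (h : IsLeftmostZero S i) (h' : IsLeftmostZero S j) : i = j :=
  leftmost_unique (p := (S · = .zero)) h h'

theorem IsLeftmostStar.eq (h : IsLeftmostStar S i) (h' : IsLeftmostStar S j) : i = j :=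
  leftmost_unique (p := (S · = .star)) h h'

theorem IsRightmostOne.le (h : IsRightmostOne S i) (hj : S j = .one) : j ≤ i :=
  not_lt.1 fun hij => h.2 j hij hj

theorem IsRightmostStar.le (h : IsRightmostStar S i) (hj : S j = .star) : j ≤ i :=
  not_lt.1 fun hij => h.2 j hij hj

theorem IsLeftmostZero.le (h : IsLeftmostZero S i) (hj : S j = .zero) : i ≤ j :=
  not_lt.1 fun hij => h.2 j hij hj

theorem IsLeftmostStar.le (h : IsLeftmostStar S i) (hj : S j = .star) : i ≤ j :=
  not_lt.1 fun hij => h.2 j hij hj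

theorem exists_isRightmostOne (h : ∃ i, S i = .one) : ∃ i, IsRightmostOne S i :=
  exists_rightmost h

theorem exists_isRightmostStar (h : hasStar S) : ∃ i, IsRightmostStar S i :=
  exists_rightmost h

theorem exists_isLeftmostZero (h : ∃ i, S i = .zero) : ∃ i, IsLeftmostZero S i :=
  exists_leftmost h

theorem exists_isLeftmostStar (h : hasStar S) : ∃ i, IsLeftmostStar S i :=
  exists_leftmost h

theorem ne_of_letter_ne {a b : Letter} (hi : S i = a) (hj : S j = b) (hab : a ≠ b) : i ≠ j := by
  rintro rfl
  exact hab (hi.symm.trans hj)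

theorem OneRight.lt_of_isRightmostOne (hO : OneRight S) (hi : IsRightmostOne S i)
    (hj : S j = .star) : j < i := by
  obtain ⟨-, p, hp, hpr⟩ := hO
  have hjp : j ≤ p := not_lt.1 fun h => hpr j h hj
  exact (hjp.trans (hi.le hp)).lt_of_ne (ne_of_letter_ne hj hi.1 (by decide))

theorem ZeroLeft.lt_of_isLeftmostZero (hZ : ZeroLeft S) (hi : IsLeftmostZero S i)
    (hj : S j = .star) : i < j := by
  obtain ⟨-, p, hp, hpl⟩ := hZ
  have hpj : p ≤ j := not_lt.1 fun h => hpl j h hj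
  exact ((hi.le hp).trans hpj).lt_of_ne (ne_of_letter_ne hi.1 hj (by decide))

theorem exists_star_ne (h : 2 ≤ countStar S) (i : Fin n) : ∃ j, j ≠ i ∧ S j = .star := by
  by_contra! hne
  have : countStar S ≤ #{i} :=
    card_le_card fun j hj => mem_singleton.2 (not_imp_comm.1 (hne j) (by simpa using hj))
  simp at this
  omega

theorem IsRightmostStar.exists_lt (hi : IsRightmostStar S i) (h : 2 ≤ countStar S) :
    ∃ j, j < i ∧ S j = .star := by
  obtain ⟨j, hji, hj⟩ := exists_star_ne h i
  exact ⟨j, (hi.le hj).lt_of_ne hji, hj⟩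

theorem IsLeftmostStar.exists_gt (hi : IsLeftmostStar S i) (h : 2 ≤ countStar S) :
    ∃ j, i < j ∧ S j = .star := by
  obtain ⟨j, hji, hj⟩ := exists_star_ne h i
  exact ⟨j, (hi.le hj).lt_of_ne hji.symm, hj⟩

end Positions

section Classification

variable {n k m0 m1 : ℕ} {S : FSeq n}

theorem noOneRight_iff : NoOneRight S ↔ hasStar S ∧ ¬ OneRight S := by
  unfold NoOneRight OneRight
  push Not
  tauto

theorem noZeroLeft_iff : NoZeroLeft S ↔ hasStar S ∧ ¬ ZeroLeft S := by
  unfold NoZeroLeft ZeroLeft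
  push Not
  tauto

theorem Type1.oneRight (h : Type1 k m0 m1 S) : OneRight S := by
  rcases h with ⟨-, hO, -⟩ | ⟨-, hO, -⟩ | ⟨-, hO, -⟩ <;> exact hO

theorem Type2.noOneRight (h : Type2 k m0 m1 S) : NoOneRight S := by
  rcases h with ⟨-, hN, -⟩ | ⟨-, hN, -⟩ | ⟨-, hN, -⟩ <;> exact hN

open scoped Classical in
noncomputable def typeOf (k m0 m1 : ℕ) (S : FSeq n) : ℕ :=
  if countStar S = 0 then 9
  else if OneRight S then
    if count1 S = m1 ∧ count0 S ≤ m0 ∧ (count0 S < m0 ∨ ZeroLeft S) then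
      if ZeroLeft S then 5 else 6
    else 1
  else if count1 S + 1 = k then
    if ZeroLeft S then 3 else if count0 S + k + 2 ≤ n then 4 else 10
  else if count1 S + 1 = m1 ∧ count0 S ≤ m0 ∧ (count0 S < m0 ∨ ZeroLeft S) then
    if ZeroLeft S then 7 else 8
  else 2

theorem typeOf_eq_of_ofType (hm1u : m1 + 1 ≤ k) {t : ℕ} (h : OfType k m0 m1 t S) :
    typeOf k m0 m1 S = t := by
  have htot := count0_add_count1_add_countStar S
  have hO : OneRight S → countStar S ≠ 0 := fun h => hasStar_iff_countStar_ne_zero.1 h.1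
  have hZ : ZeroLeft S → countStar S ≠ 0 := fun h => hasStar_iff_countStar_ne_zero.1 h.1
  rcases t with _|_|_|_|_|_|_|_|_|_|_|t <;>
    simp only [OfType, Type1, Type2, Type3, Type4, Type5, Type6, Type7, Type8, Type9, Type10,
      Cond1a, Cond1b, Cond1c, Cond2a, Cond2b, Cond2c, noOneRight_iff, noZeroLeft_iff,
      hasStar_iff_countStar_ne_zero] at h <;>
    unfold typeOf <;> split_ifs <;> simp_all <;> omega

theorem ofType_typeOf (hF : FaceSeq k S) (hv : S ≠ v0seq n k) :
    OfType k m0 m1 (typeOf k m0 m1 S) S := by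
  have htot := count0_add_count1_add_countStar S
  unfold FaceSeq at hF
  unfold typeOf
  split_ifs <;>
    simp only [OfType, Type1, Type2, Type3, Type4, Type5, Type6, Type7, Type8, Type9, Type10,
      Cond1a, Cond1b, Cond1c, Cond2a, Cond2b, Cond2c, noOneRight_iff, noZeroLeft_iff,
      hasStar_iff_countStar_ne_zero] <;>
    by_cases ZeroLeft S <;> simp_all <;> omega

end Classification

section Rules

variable {n : ℕ}

def Rule : ℕ → FSeq n → FSeq n → Prop
  | 1 => Apply1
  | 2 => Apply2
  | 3 | 5 | 7 => Apply3
  | 4 | 6 | 8 => Apply4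
  | 9 => Apply9
  | 10 => Apply10
  | _ => fun _ _ => False

theorem rightUnique_apply1 : Relator.RightUnique (@Apply1 n) := by
  rintro T _ _ ⟨i, hi, rfl⟩ ⟨j, hj, rfl⟩
  rw [hi.eq hj]

theorem rightUnique_apply2 : Relator.RightUnique (@Apply2 n) := by
  rintro T _ _ ⟨i, hi, rfl⟩ ⟨j, hj, rfl⟩
  rw [hi.eq hj]

theorem rightUnique_apply3 : Relator.RightUnique (@Apply3 n) := by
  rintro T _ _ ⟨i, hi, rfl⟩ ⟨j, hj, rfl⟩
  rw [hi.eq hj]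

theorem rightUnique_apply4 : Relator.RightUnique (@Apply4 n) := by
  rintro T _ _ ⟨i, hi, rfl⟩ ⟨j, hj, rfl⟩
  rw [hi.eq hj]

theorem rightUnique_apply9 : Relator.RightUnique (@Apply9 n) := by
  rintro T _ _ ⟨i, j, hi, hj, rfl⟩ ⟨i', j', hi', hj', rfl⟩
  rw [hi.eq hi', hj.eq hj']

theorem rightUnique_apply10 : Relator.RightUnique (@Apply10 n) := by
  rintro T _ _ ⟨i, j, hi, hj, -, rfl⟩ ⟨i', j', hi', hj', -, rfl⟩
  rw [hi.eq hi', hj.eq hj']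

theorem rightUnique_rule : ∀ t, Relator.RightUnique (Rule (n := n) t)
  | 1 => rightUnique_apply1
  | 2 => rightUnique_apply2
  | 3 | 5 | 7 => rightUnique_apply3
  | 4 | 6 | 8 => rightUnique_apply4
  | 9 => rightUnique_apply9
  | 10 => rightUnique_apply10
  | 0 | _ + 11 => fun _ _ _ h => h.elim

end Rules

section Updates

variable {n : ℕ} {S : FSeq n} {i j : Fin n}

theorem update_update_eq_self {a b : Letter} (h : S i = a) : update (update S i b) i a = S := by
  rw [update_idem, ← h, update_eq_self]

theorem update_star_apply_of_eq_star (c : Fin n) (hj : S j = .star) :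
    update S c .star j = .star := by
  by_cases h : j = c <;> simp [h, hj]

theorem hasStar_update_star : hasStar (update S i .star) := ⟨i, update_self ..⟩

theorem NoZeroLeft.update_star (h : NoZeroLeft S) : NoZeroLeft (update S i .star) := by
  refine ⟨hasStar_update_star, fun z hz => ?_⟩
  rw [update_of_ne (by rintro rfl; simp at hz)] at hz
  obtain ⟨q, hqz, hq⟩ := h.2 z hz
  exact ⟨q, hqz, update_star_apply_of_eq_star i hq⟩

theorem NoOneRight.update_star (h : NoOneRight S) : NoOneRight (update S i .star) := by
  refine ⟨hasStar_update_star, fun p hp => ?_⟩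
  rw [update_of_ne (by rintro rfl; simp at hp)] at hp
  obtain ⟨q, hpq, hq⟩ := h.2 p hp
  exact ⟨q, hpq, update_star_apply_of_eq_star i hq⟩

theorem IsRightmostOne.noOneRight_update_star (hi : IsRightmostOne S i) :
    NoOneRight (update S i .star) := by
  refine ⟨hasStar_update_star, fun p hp => ⟨i, ?_, update_self ..⟩⟩
  have hpi : p ≠ i := by rintro rfl; simp at hp
  rw [update_of_ne hpi] at hp
  exact (hi.le hp).lt_of_ne hpi

theorem IsLeftmostZero.noZeroLeft_update_star (hi : IsLeftmostZero S i) :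
    NoZeroLeft (update S i .star) := by
  refine ⟨hasStar_update_star, fun z hz => ⟨i, ?_, update_self ..⟩⟩
  have hzi : z ≠ i := by rintro rfl; simp at hz
  rw [update_of_ne hzi] at hz
  exact (hi.le hz).lt_of_ne hzi.symm

theorem OneRight.isRightmostStar_update_star (hO : OneRight S) (hi : IsRightmostOne S i) :
    IsRightmostStar (update S i .star) i :=
  ⟨update_self .., fun j hij hj => by
    rw [update_of_ne hij.ne'] at hj
    exact (hO.lt_of_isRightmostOne hi hj).not_gt hij⟩

theorem ZeroLeft.isLeftmostStar_update_star (hZ : ZeroLeft S) (hi : IsLeftmostZero S i) :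
    IsLeftmostStar (update S i .star) i :=
  ⟨update_self .., fun j hji hj => by
    rw [update_of_ne hji.ne] at hj
    exact (hZ.lt_of_isLeftmostZero hi hj).not_gt hji⟩

theorem OneRight.update_star_of_isLeftmostZero (hO : OneRight S) (hZ : ZeroLeft S)
    (hi : IsLeftmostZero S i) : OneRight (update S i .star) := by
  obtain ⟨⟨s, hs⟩, p, hp, hpr⟩ := hO
  have hsp : s < p := (not_lt.1 fun h => hpr s h hs).lt_of_ne (ne_of_letter_ne hs hp (by decide))
  have hip : i < p := (hZ.lt_of_isLeftmostZero hi hs).trans hsp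
  refine ⟨hasStar_update_star, p, by rwa [update_of_ne hip.ne'], fun q hpq => ?_⟩
  rw [update_of_ne (hip.trans hpq).ne']
  exact hpr q hpq

end Updates

section Forward

variable {n k m0 m1 : ℕ} {S S' : FSeq n} {i j : Fin n}

theorem Type1.forward (h : Type1 k m0 m1 S) (hA : Apply1 S S') :
    Type2 k m0 m1 S' ∧ Apply2 S' S := by
  obtain ⟨i, hi, rfl⟩ := hA
  have hO := h.oneRight
  obtain ⟨c0, c1, -⟩ := counts_update_star_of_eq_one hi.1
  have hN := hi.noOneRight_update_star
  refine ⟨?_, i, hO.isRightmostStar_update_star hi, (update_update_eq_self hi.1).symm⟩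
  rcases h with ⟨hk, -, hne⟩ | ⟨hk, -, he, hgt⟩ | ⟨hk, -, he, heq, hNZ⟩
  · exact Or.inl ⟨by omega, hN, by omega⟩
  · exact Or.inr (Or.inl ⟨by omega, hN, by omega, by omega⟩)
  · exact Or.inr (Or.inr ⟨by omega, hN, by omega, by omega, hNZ.update_star⟩)

theorem Type3.forward (h : Type3 k S) (hA : Apply3 S S') : Type4 k S' ∧ Apply4 S' S := by
  obtain ⟨h1, h0, hN, hZ⟩ := h
  obtain ⟨i, hi, rfl⟩ := hA
  obtain ⟨c0, c1, -⟩ := counts_update_star_of_eq_zero hi.1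
  exact ⟨⟨by omega, by omega, hN.update_star, hi.noZeroLeft_update_star⟩,
    i, hZ.isLeftmostStar_update_star hi, (update_update_eq_self hi.1).symm⟩

theorem Type5.forward (h : Type5 m0 m1 S) (hA : Apply3 S S') : Type6 m0 m1 S' ∧ Apply4 S' S := by
  obtain ⟨h1, h0, hO, hZ⟩ := h
  obtain ⟨i, hi, rfl⟩ := hA
  obtain ⟨c0, c1, -⟩ := counts_update_star_of_eq_zero hi.1
  exact ⟨⟨by omega, by omega, hO.update_star_of_isLeftmostZero hZ hi,
    hi.noZeroLeft_update_star⟩, i, hZ.isLeftmostStar_update_star hi,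
    (update_update_eq_self hi.1).symm⟩

theorem Type7.forward (h : Type7 m0 m1 S) (hA : Apply3 S S') : Type8 m0 m1 S' ∧ Apply4 S' S := by
  obtain ⟨h1, h0, hN, hZ⟩ := h
  obtain ⟨i, hi, rfl⟩ := hA
  obtain ⟨c0, c1, -⟩ := counts_update_star_of_eq_zero hi.1
  exact ⟨⟨by omega, by omega, hN.update_star, hi.noZeroLeft_update_star⟩,
    i, hZ.isLeftmostStar_update_star hi, (update_update_eq_self hi.1).symm⟩

theorem Type9.countStar_eq_zero (h : Type9 k S) : countStar S = 0 := by
  have := count0_add_count1_add_countStar S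
  have := h.1
  have := h.2.1
  omega

theorem Type9.ne_star (h : Type9 k S) (p : Fin n) : S p ≠ .star :=
  fun hp => hasStar_iff_countStar_ne_zero.1 ⟨p, hp⟩ h.countStar_eq_zero

theorem Type9.lt_of_isLeftmostZero (h : Type9 k S) (hi : IsLeftmostZero S i)
    (hj : IsRightmostOne S j) : i < j := by
  -- otherwise all ones precede all zeros, and the `k` ones fill exactly the first `k` places
  refine lt_of_not_ge fun hji => h.2.2 ?_
  replace hji : j < i := hji.lt_of_ne (ne_of_letter_ne hj.1 hi.1 (by decide))
  have hS : ∀ p, S p = if p < i then .one else .zero := by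
    intro p
    split_ifs with hp
    · rcases hq : S p
      exacts [absurd hq (hi.2 p hp), rfl, absurd hq (h.ne_star p)]
    · rcases hq : S p
      exacts [rfl, absurd hq (hj.2 p (hji.trans_le (not_lt.1 hp))), absurd hq (h.ne_star p)]
  have hik : (i : ℕ) = k := by
    rw [← h.1, count1]
    simp only [hS, ite_eq_left_iff, reduceCtorEq, imp_false, not_not, filter_gt_eq_Iio,
      Fin.card_Iio]
  funext p
  simp only [hS p, v0seq, Fin.lt_def, hik]

theorem Type9.forward (h : Type9 k S) (hA : Apply9 S S') : Type10 k S' ∧ Apply10 S' S := by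
  obtain ⟨i, j, hi, hj, rfl⟩ := hA
  have hij := h.lt_of_isLeftmostZero hi hj
  obtain ⟨c0, c1, -⟩ := counts_update_star_of_eq_zero hi.1
  set T := update S i .star
  have hT : ∀ p, p ≠ i → T p = S p := fun p hp => update_of_ne hp _ _
  have hTj : T j = .one := by rw [hT j hij.ne']; exact hj.1
  have hjT : IsRightmostOne T j := ⟨hTj, fun p hjp => by
    rw [hT p (hij.trans hjp).ne']; exact hj.2 p hjp⟩
  have hOT : OneRight T := ⟨hasStar_update_star, j, hTj, fun p hjp => by
    rw [hT p (hij.trans hjp).ne']; exact h.ne_star p⟩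
  have hiS' : IsLeftmostStar (update T j .star) i := by
    refine ⟨by rw [update_of_ne hij.ne]; exact update_self .., fun p hpi hp => ?_⟩
    rw [update_of_ne (hpi.trans hij).ne, hT p hpi.ne] at hp
    exact h.ne_star p hp
  obtain ⟨c0', c1', -⟩ := counts_update_star_of_eq_one hTj
  have := h.1
  have := h.2.1
  refine ⟨⟨by omega, by omega, hjT.noOneRight_update_star,
    hi.noZeroLeft_update_star.update_star⟩, i, j, hiS', hOT.isRightmostStar_update_star hjT,
    hij.ne, ?_⟩
  funext p
  rcases eq_or_ne p j with rfl | hpj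
  · simp [hj.1]
  rcases eq_or_ne p i with rfl | hpi
  · simp [T, hij.ne, hi.1]
  · simp [T, hpj, hpi]

end Forward

section Backward

variable {n k m0 m1 : ℕ} {S : FSeq n} {j l s : Fin n}

theorem FaceSeq.bounds (hF : FaceSeq k S) (hs : hasStar S) :
    count1 S + 1 ≤ k ∧ k + 1 ≤ count1 S + countStar S :=
  hF.resolve_left fun h => hasStar_iff_countStar_ne_zero.1 hs h.1

theorem NoOneRight.isRightmostOne_update_one (hN : NoOneRight S) (hj : IsRightmostStar S j) :
    IsRightmostOne (update S j .one) j := by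
  refine ⟨update_self .., fun p hjp hp => ?_⟩
  rw [update_of_ne hjp.ne'] at hp
  obtain ⟨q, hpq, hq⟩ := hN.2 p hp
  exact (hj.le hq).not_gt (hjp.trans hpq)

theorem NoZeroLeft.isLeftmostZero_update_zero (hNZ : NoZeroLeft S) (hl : IsLeftmostStar S l) :
    IsLeftmostZero (update S l .zero) l := by
  refine ⟨update_self .., fun p hpl hp => ?_⟩
  rw [update_of_ne hpl.ne] at hp
  obtain ⟨q, hqp, hq⟩ := hNZ.2 p hp
  exact (hl.le hq).not_gt (hqp.trans hpl)

theorem IsRightmostStar.oneRight_update_one (hj : IsRightmostStar S j) (hs : S s = .star)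
    (hsj : s ≠ j) : OneRight (update S j .one) :=
  ⟨⟨s, by rwa [update_of_ne hsj]⟩, j, update_self .., fun p hjp => by
    rw [update_of_ne hjp.ne']; exact hj.2 p hjp⟩

theorem IsLeftmostStar.zeroLeft_update_zero (hl : IsLeftmostStar S l) (hs : S s = .star)
    (hsl : s ≠ l) : ZeroLeft (update S l .zero) :=
  ⟨⟨s, by rwa [update_of_ne hsl]⟩, l, update_self .., fun p hpl => by
    rw [update_of_ne hpl.ne]; exact hl.2 p hpl⟩

theorem NoZeroLeft.update_of_lt {c : Letter} (h : NoZeroLeft S) (hs : S s = .star) (hsj : s < j)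
    (hc : c ≠ .zero) : NoZeroLeft (update S j c) := by
  refine ⟨⟨s, by rwa [update_of_ne hsj.ne]⟩, fun z hz => ?_⟩
  have hzj : z ≠ j := by rintro rfl; simp [hc] at hz
  rw [update_of_ne hzj] at hz
  obtain ⟨q, hqz, hq⟩ := h.2 z hz
  rcases eq_or_ne q j with rfl | hqj
  · exact ⟨s, hsj.trans hqz, by rwa [update_of_ne hsj.ne]⟩
  · exact ⟨q, hqz, by rwa [update_of_ne hqj]⟩

theorem NoOneRight.update_of_gt {c : Letter} (h : NoOneRight S) (hs : S s = .star) (hjs : j < s)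
    (hc : c ≠ .one) : NoOneRight (update S j c) := by
  refine ⟨⟨s, by rwa [update_of_ne hjs.ne']⟩, fun p hp => ?_⟩
  have hpj : p ≠ j := by rintro rfl; simp [hc] at hp
  rw [update_of_ne hpj] at hp
  obtain ⟨q, hpq, hq⟩ := h.2 p hp
  rcases eq_or_ne q j with rfl | hqj
  · exact ⟨s, hpq.trans hjs, by rwa [update_of_ne hjs.ne']⟩
  · exact ⟨q, hpq, by rwa [update_of_ne hqj]⟩

theorem OneRight.update_of_eq_star {c : Letter} (h : OneRight S) (hl : S l = .star)
    (hs : S s = .star) (hsl : s ≠ l) (hc : c ≠ .star) : OneRight (update S l c) := by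
  obtain ⟨-, p, hp, hpr⟩ := h
  refine ⟨⟨s, by rwa [update_of_ne hsl]⟩, p, ?_, fun q hpq => ?_⟩
  · rwa [update_of_ne (ne_of_letter_ne hp hl (by decide))]
  · rcases eq_or_ne q l with rfl | hql
    · simpa using hc
    · rw [update_of_ne hql]; exact hpr q hpq

theorem Type2.exists_backward (hF : FaceSeq k S) (h : Type2 k m0 m1 S) :
    ∃ T, FaceSeq k T ∧ Type1 k m0 m1 T ∧ Apply1 T S := by
  have hN := h.noOneRight
  have hk : count1 S + 2 ≤ k := by rcases h with ⟨hk, -⟩ | ⟨hk, -⟩ | ⟨hk, -⟩ <;> exact hk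
  have hF' := hF.bounds hN.1
  obtain ⟨j, hj⟩ := exists_isRightmostStar hN.1
  obtain ⟨s, hsj, hs⟩ := hj.exists_lt (by omega)
  obtain ⟨c0, c1, cs⟩ := counts_update_one_of_eq_star hj.1
  have hO := hj.oneRight_update_one hs hsj.ne
  refine ⟨_, Or.inr ⟨by omega, by omega⟩, ?_, j, hN.isRightmostOne_update_one hj,
    (update_update_eq_self hj.1).symm⟩
  rcases h with ⟨-, -, hne⟩ | ⟨-, -, he, hgt⟩ | ⟨-, -, he, heq, hNZ⟩
  · exact Or.inl ⟨by omega, hO, by omega⟩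
  · exact Or.inr (Or.inl ⟨by omega, hO, by omega, by omega⟩)
  · exact Or.inr (Or.inr ⟨by omega, hO, by omega, by omega,
      hNZ.update_of_lt hs hsj (by decide)⟩)

theorem NoZeroLeft.backward (hNZ : NoZeroLeft S) (hl : IsLeftmostStar S l) (hs : S s = .star)
    (hls : l < s) : ZeroLeft (update S l .zero) ∧ Apply3 (update S l .zero) S :=
  ⟨hl.zeroLeft_update_zero hs hls.ne', l, hNZ.isLeftmostZero_update_zero hl,
    (update_update_eq_self hl.1).symm⟩

theorem Type4.exists_backward (h : Type4 k S) :
    ∃ T, FaceSeq k T ∧ Type3 k T ∧ Apply3 T S := by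
  obtain ⟨h1, h0, hN, hNZ⟩ := h
  have htot := count0_add_count1_add_countStar S
  obtain ⟨l, hl⟩ := exists_isLeftmostStar hN.1
  obtain ⟨s, hls, hs⟩ := hl.exists_gt (by omega)
  obtain ⟨c0, c1, cs⟩ := counts_update_zero_of_eq_star hl.1
  obtain ⟨hZ, hA⟩ := hNZ.backward hl hs hls
  exact ⟨_, Or.inr ⟨by omega, by omega⟩,
    ⟨by omega, by omega, hN.update_of_gt hs hls (by decide), hZ⟩, hA⟩

theorem Type6.exists_backward (hm0 : m0 + k + 1 ≤ n) (hF : FaceSeq k S) (h : Type6 m0 m1 S) :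
    ∃ T, FaceSeq k T ∧ Type5 m0 m1 T ∧ Apply3 T S := by
  obtain ⟨h1, h0, hO, hNZ⟩ := h
  have htot := count0_add_count1_add_countStar S
  have hF' := hF.bounds hO.1
  obtain ⟨l, hl⟩ := exists_isLeftmostStar hO.1
  obtain ⟨s, hls, hs⟩ := hl.exists_gt (by omega)
  obtain ⟨c0, c1, cs⟩ := counts_update_zero_of_eq_star hl.1
  obtain ⟨hZ, hA⟩ := hNZ.backward hl hs hls
  exact ⟨_, Or.inr ⟨by omega, by omega⟩,
    ⟨by omega, by omega, hO.update_of_eq_star hl.1 hs hls.ne' (by decide), hZ⟩, hA⟩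

theorem Type8.exists_backward (hm0 : m0 + k + 1 ≤ n) (hF : FaceSeq k S) (h : Type8 m0 m1 S) :
    ∃ T, FaceSeq k T ∧ Type7 m0 m1 T ∧ Apply3 T S := by
  obtain ⟨h1, h0, hN, hNZ⟩ := h
  have htot := count0_add_count1_add_countStar S
  have hF' := hF.bounds hN.1
  obtain ⟨l, hl⟩ := exists_isLeftmostStar hN.1
  obtain ⟨s, hls, hs⟩ := hl.exists_gt (by omega)
  obtain ⟨c0, c1, cs⟩ := counts_update_zero_of_eq_star hl.1
  obtain ⟨hZ, hA⟩ := hNZ.backward hl hs hls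
  exact ⟨_, Or.inr ⟨by omega, by omega⟩,
    ⟨by omega, by omega, hN.update_of_gt hs hls (by decide), hZ⟩, hA⟩

theorem ne_v0seq_of_lt {i : Fin n} (hi : S i = .zero) (hj : S j = .one) (hij : i < j) :
    S ≠ v0seq n k := by
  rintro rfl
  simp only [v0seq] at hi hj
  split_ifs at hi hj with hik hjk
  exact hik ((Fin.lt_def.1 hij).trans hjk)

theorem Type10.exists_backward (h : Type10 k S) : ∃ T, FaceSeq k T ∧ Type9 k T ∧ Apply9 T S := by
  obtain ⟨h1, h0, hN, hNZ⟩ := h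
  have htot := count0_add_count1_add_countStar S
  obtain ⟨l, hl⟩ := exists_isLeftmostStar hN.1
  obtain ⟨r, hr⟩ := exists_isRightmostStar hN.1
  obtain ⟨s, hls, hs⟩ := hl.exists_gt (by omega)
  have hlr : l < r := hls.trans_le (hr.le hs)
  obtain ⟨c0, c1, cs⟩ := counts_update_zero_of_eq_star hl.1
  set U := update S l .zero
  have hU : ∀ p, p ≠ l → U p = S p := fun p hp => update_of_ne hp _ _
  have hrU : IsRightmostStar U r := ⟨by rw [hU r hlr.ne']; exact hr.1, fun p hrp => by
    rw [hU p (hlr.trans hrp).ne']; exact hr.2 p hrp⟩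
  have hlU : IsLeftmostZero U l := hNZ.isLeftmostZero_update_zero hl
  obtain ⟨c0', c1', cs'⟩ := counts_update_one_of_eq_star hrU.1
  have hTl : update U r .one l = .zero := by rw [update_of_ne hlr.ne]; exact hlU.1
  refine ⟨update U r .one, Or.inl ⟨by omega, by omega⟩,
    ⟨by omega, by omega, ne_v0seq_of_lt hTl (update_self ..) hlr⟩, l, r,
    ⟨hTl, fun p hpl => by rw [update_of_ne (hpl.trans hlr).ne]; exact hlU.2 p hpl⟩,
    (hN.update_of_gt hr.1 hlr (by decide)).isRightmostOne_update_one hrU, ?_⟩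
  funext p
  rcases eq_or_ne p r with rfl | hpr
  · simp [hr.1]
  rcases eq_or_ne p l with rfl | hpl
  · simp [hlr.ne, hl.1]
  · simp [U, hpr, hpl]

end Backward

section Codimension

variable {n k m0 m1 : ℕ} {S S' : FSeq n} {i j : Fin n}

def fillStars (S : FSeq n) (A : Finset (Fin n)) : FSeq n :=
  fun p => if S p = .star then (if p ∈ A then .one else .zero) else S p

theorem fillStars_mem_vertexSet {A : Finset (Fin n)} (hA : A ⊆ univ.filter (S · = .star))
    (hcard : count1 S + #A = k) : fillStars S A ∈ VertexSet k S := by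
  refine ⟨fun p => ?_, ?_, fun p hp => if_neg hp⟩
  · unfold fillStars
    split_ifs <;> simp_all
  · have hdisj : Disjoint (univ.filter (S · = .one)) A :=
      disjoint_left.2 fun p hp hpA => by simpa [(mem_filter.1 hp).2] using hA hpA
    have hones : univ.filter (fillStars S A · = .one) = univ.filter (S · = .one) ∪ A := by
      ext p
      have := @hA p
      rw [mem_filter, mem_union, mem_filter] at *
      simp only [fillStars, mem_univ, true_and] at this ⊢
      by_cases hp : S p = .star <;> by_cases hpA : p ∈ A <;> simp_all
    rw [← hcard, count1, hones, card_union_of_disjoint hdisj]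
    rfl

theorem exists_mem_vertexSet_apply_eq (hi : S i = .star) (h1 : count1 S < k)
    (h2 : k < count1 S + countStar S) {a : Letter} (ha : a ≠ .star) :
    ∃ w ∈ VertexSet k S, w i = a := by
  have hmem : i ∈ univ.filter (S · = .star) := by simpa using hi
  cases a with
  | zero =>
    obtain ⟨A, -, hA, hcard⟩ := exists_subsuperset_card_eq (empty_subset _) (Nat.zero_le _)
      (n := k - count1 S) (t := (univ.filter (S · = .star)).erase i)
      (by rw [card_erase_of_mem hmem]; exact Nat.le_sub_one_of_lt (by unfold countStar at h2; omega))
    have hiA : i ∉ A := fun h => (notMem_erase i _) (hA h)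
    exact ⟨_, fillStars_mem_vertexSet (hA.trans (erase_subset _ _)) (by omega),
      by simp [fillStars, hi, hiA]⟩
  | one =>
    obtain ⟨A, hiA, hA, hcard⟩ := exists_subsuperset_card_eq (singleton_subset_iff.2 hmem)
      (n := k - count1 S) (by simp; omega) (by unfold countStar at h2; omega)
    exact ⟨_, fillStars_mem_vertexSet hA (by omega),
      by simp [fillStars, hi, singleton_subset_iff.1 hiA]⟩
  | star => exact absurd rfl ha

theorem codim1_of_le (hle : ∀ p, S' p = S p ∨ S' p = .star) (hi : S i ≠ .star)
    (hi' : S' i = .star) (h1 : count1 S' < k) (h2 : k < count1 S' + countStar S')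
    (hdim : fdim S + 1 = fdim S') : Codim1 k S S' := by
  have hsub : VertexSet k S ⊆ VertexSet k S' := fun v ⟨hv, hcv, hvS⟩ =>
    ⟨hv, hcv, fun p hp => by
      rcases hle p with h | h
      · rw [h] at hp ⊢; exact hvS p hp
      · exact absurd h hp⟩
  obtain ⟨a, ha, haS⟩ : ∃ a, a ≠ .star ∧ a ≠ S i := by
    rcases hSi : S i with _ | _ | _
    exacts [⟨.one, by decide, by decide⟩, ⟨.zero, by decide, by decide⟩, absurd hSi hi]
  obtain ⟨w, hw, hwi⟩ := exists_mem_vertexSet_apply_eq hi' h1 h2 ha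
  exact ⟨(Set.ssubset_iff_of_subset hsub).2 ⟨w, hw, fun hwS => haS (hwi ▸ hwS.2.2 i hi)⟩, hdim⟩

theorem codim1_update_star (hF : FaceSeq k S) (hs : hasStar S) (hi : S i ≠ .star) :
    Codim1 k S (update S i .star) := by
  have hF' := hF.bounds hs
  have hs' := hasStar_iff_countStar_ne_zero.1 hs
  obtain ⟨-, c1, cs⟩ := counts_update S i .star
  simp only [hi, if_true, if_false, reduceCtorEq] at c1 cs
  refine codim1_of_le (fun p => ?_) hi (update_self ..) (by split_ifs at c1 <;> omega)
    (by split_ifs at c1 <;> omega) ?_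
  · rcases eq_or_ne p i with rfl | hp
    · simp
    · simp [hp]
  · simp only [fdim, if_neg hs', if_neg (show countStar (update S i .star) ≠ 0 by omega)]
    omega

theorem Type9.codim1 (h : Type9 k S) (hi : IsLeftmostZero S i) (hj : IsRightmostOne S j) :
    Codim1 k S (update (update S i .star) j .star) := by
  have hij : i ≠ j := ne_of_letter_ne hi.1 hj.1 (by decide)
  obtain ⟨-, c1, cs⟩ := counts_update_star_of_eq_zero hi.1
  obtain ⟨-, c1', cs'⟩ := counts_update_star_of_eq_one (i := j) (S := update S i .star)
    (by rw [update_of_ne hij.symm]; exact hj.1)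
  rw [h.countStar_eq_zero] at cs
  have := h.1
  refine codim1_of_le (fun p => ?_) (h.ne_star i) (by rw [update_of_ne hij]; exact update_self ..)
    (by omega) (by omega) ?_
  · rcases eq_or_ne p j with rfl | hpj
    · simp
    rcases eq_or_ne p i with rfl | hpi
    · simp [hij]
    · simp [hpi, hpj]
  · have hs2 : countStar (update (update S i .star) j .star) = 2 := by omega
    simp [fdim, h.countStar_eq_zero, hs2]

theorem Vmatch.codim1 (h : Vmatch k m0 m1 S S') : Codim1 k S S' := by
  obtain ⟨hF, h⟩ := h
  rcases h with ⟨h1, i, hi, rfl⟩ | ⟨⟨-, -, -, hZ⟩, i, hi, rfl⟩ | ⟨⟨-, -, -, hZ⟩, i, hi, rfl⟩ |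
    ⟨⟨-, -, -, hZ⟩, i, hi, rfl⟩ | ⟨h9, i, j, hi, hj, rfl⟩
  · exact codim1_update_star hF h1.oneRight.1 (by simp [hi.1])
  any_goals exact codim1_update_star hF hZ.1 (by simp [hi.1])
  exact h9.codim1 hi hj

end Codimension

section Matching

variable {n k m0 m1 t : ℕ} {S S' T : FSeq n}

theorem vmatch_iff : Vmatch k m0 m1 S S' ↔
    FaceSeq k S ∧ ∃ t, Odd t ∧ OfType k m0 m1 t S ∧ Rule t S S' := by
  refine and_congr_right fun _ => ⟨?_, ?_⟩
  · rintro (⟨h, hR⟩ | ⟨h, hR⟩ | ⟨h, hR⟩ | ⟨h, hR⟩ | ⟨h, hR⟩)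
    exacts [⟨1, by decide, h, hR⟩, ⟨3, by decide, h, hR⟩, ⟨5, by decide, h, hR⟩,
      ⟨7, by decide, h, hR⟩, ⟨9, by decide, h, hR⟩]
  · rintro ⟨t, hodd, ht, hR⟩
    match t, hodd, ht, hR with
    | 1, _, ht, hR => exact Or.inl ⟨ht, hR⟩
    | 3, _, ht, hR => exact Or.inr (Or.inl ⟨ht, hR⟩)
    | 5, _, ht, hR => exact Or.inr (Or.inr (Or.inl ⟨ht, hR⟩))
    | 7, _, ht, hR => exact Or.inr (Or.inr (Or.inr (Or.inl ⟨ht, hR⟩)))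
    | 9, _, ht, hR => exact Or.inr (Or.inr (Or.inr (Or.inr ⟨ht, hR⟩)))
    | 0, _, ht, _ | _ + 11, _, ht, _ => exact ht.elim
    | 2, hodd, _, _ | 4, hodd, _, _ | 6, hodd, _, _ | 8, hodd, _, _ | 10, hodd, _, _ =>
      exact absurd hodd (by decide)

theorem ofType_succ_of_rule (hodd : Odd t) (ht : OfType k m0 m1 t S) (hR : Rule t S S') :
    OfType k m0 m1 (t + 1) S' ∧ Rule (t + 1) S' S :=
  match t, hodd, ht, hR with
  | 1, _, ht, hR => Type1.forward ht hR
  | 3, _, ht, hR => Type3.forward ht hR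
  | 5, _, ht, hR => Type5.forward ht hR
  | 7, _, ht, hR => Type7.forward ht hR
  | 9, _, ht, hR => Type9.forward ht hR
  | 0, _, ht, _ | _ + 11, _, ht, _ => ht.elim
  | 2, hodd, _, _ | 4, hodd, _, _ | 6, hodd, _, _ | 8, hodd, _, _ | 10, hodd, _, _ =>
    absurd hodd (by decide)

theorem exists_rule_of_odd (hk : 0 < k) (hkn : k < n) (hodd : Odd t)
    (ht : OfType k m0 m1 t S) : ∃ S', Rule t S S' := by
  have zeroLeft_rule : ZeroLeft S → ∃ S', Apply3 S S' := fun ⟨_, p, hp, _⟩ => by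
    obtain ⟨i, hi⟩ := exists_isLeftmostZero ⟨p, hp⟩
    exact ⟨_, i, hi, rfl⟩
  match t, hodd, ht with
  | 1, _, ht =>
    obtain ⟨-, p, hp, -⟩ := Type1.oneRight ht
    obtain ⟨i, hi⟩ := exists_isRightmostOne ⟨p, hp⟩
    exact ⟨_, i, hi, rfl⟩
  | 3, _, ht => exact zeroLeft_rule ht.2.2.2
  | 5, _, ht => exact zeroLeft_rule ht.2.2.2
  | 7, _, ht => exact zeroLeft_rule ht.2.2.2
  | 9, _, ht =>
    have htot := count0_add_count1_add_countStar S
    obtain ⟨h1, h0, -⟩ := ht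
    obtain ⟨p, hp⟩ := card_pos.1 (show 0 < count0 S by omega)
    obtain ⟨q, hq⟩ := card_pos.1 (show 0 < count1 S by omega)
    obtain ⟨i, hi⟩ := exists_isLeftmostZero ⟨p, (mem_filter.1 hp).2⟩
    obtain ⟨j, hj⟩ := exists_isRightmostOne ⟨q, (mem_filter.1 hq).2⟩
    exact ⟨_, i, j, hi, hj, rfl⟩
  | 0, _, ht | _ + 11, _, ht => exact ht.elim
  | 2, hodd, _ | 4, hodd, _ | 6, hodd, _ | 8, hodd, _ | 10, hodd, _ => exact absurd hodd (by decide)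

theorem exists_rule_of_even (hm0 : m0 + k + 1 ≤ n) (hF : FaceSeq k S) (hodd : Odd t)
    (ht : OfType k m0 m1 (t + 1) S) : ∃ T, FaceSeq k T ∧ OfType k m0 m1 t T ∧ Rule t T S :=
  match t, hodd, ht with
  | 1, _, ht => Type2.exists_backward hF ht
  | 3, _, ht => Type4.exists_backward ht
  | 5, _, ht => Type6.exists_backward hm0 hF ht
  | 7, _, ht => Type8.exists_backward hm0 hF ht
  | 9, _, ht => Type10.exists_backward ht
  | _ + 10, _, ht => ht.elim
  | 0, hodd, _ | 2, hodd, _ | 4, hodd, _ | 6, hodd, _ | 8, hodd, _ => absurd hodd (by decide)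

theorem Vmatch.typeOf_fst (hm1u : m1 + 1 ≤ k) (h : Vmatch k m0 m1 S S') :
    Odd (typeOf k m0 m1 S) ∧ Rule (typeOf k m0 m1 S) S S' := by
  obtain ⟨-, t, hodd, ht, hR⟩ := vmatch_iff.1 h
  rw [typeOf_eq_of_ofType hm1u ht]
  exact ⟨hodd, hR⟩

theorem Vmatch.typeOf_snd (hm1u : m1 + 1 ≤ k) (h : Vmatch k m0 m1 T S) :
    Even (typeOf k m0 m1 S) ∧ Rule (typeOf k m0 m1 S) S T := by
  obtain ⟨-, t, hodd, ht, hR⟩ := vmatch_iff.1 h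
  obtain ⟨ht', hR'⟩ := ofType_succ_of_rule hodd ht hR
  rw [typeOf_eq_of_ofType hm1u ht']
  exact ⟨hodd.add_one, hR'⟩

theorem Vmatch.right_unique (hm1u : m1 + 1 ≤ k) (h : Vmatch k m0 m1 S S')
    (h' : Vmatch k m0 m1 S T) : S' = T :=
  rightUnique_rule _ (h.typeOf_fst hm1u).2 (h'.typeOf_fst hm1u).2

theorem Vmatch.left_unique (hm1u : m1 + 1 ≤ k) (h : Vmatch k m0 m1 S' S)
    (h' : Vmatch k m0 m1 T S) : S' = T :=
  rightUnique_rule _ (h.typeOf_snd hm1u).2 (h'.typeOf_snd hm1u).2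

theorem Vmatch.not_vmatch_snd (hm1u : m1 + 1 ≤ k) (h : Vmatch k m0 m1 S S') :
    ¬ Vmatch k m0 m1 T S :=
  fun h' => Nat.not_even_iff_odd.2 (h.typeOf_fst hm1u).1 (h'.typeOf_snd hm1u).1

theorem not_hasStar_v0seq : ¬ hasStar (v0seq n k) := fun ⟨i, hi⟩ => by
  unfold v0seq at hi
  split_ifs at hi

theorem Vmatch.fst_ne_v0seq (h : Vmatch k m0 m1 S S') : S ≠ v0seq n k := by
  rintro rfl
  rcases h.2 with ⟨h1, -⟩ | ⟨⟨-, -, -, hZ⟩, -⟩ | ⟨⟨-, -, -, hZ⟩, -⟩ | ⟨⟨-, -, -, hZ⟩, -⟩ |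
    ⟨⟨-, -, hne⟩, -⟩
  · exact not_hasStar_v0seq h1.oneRight.1
  any_goals exact not_hasStar_v0seq hZ.1
  exact hne rfl

theorem Vmatch.hasStar_snd (h : Vmatch k m0 m1 T S) : hasStar S := by
  rcases h.2 with ⟨-, i, -, rfl⟩ | ⟨-, i, -, rfl⟩ | ⟨-, i, -, rfl⟩ | ⟨-, i, -, rfl⟩ |
    ⟨-, -, i, -, -, rfl⟩ <;>
  exact hasStar_update_star

theorem Vmatch.snd_ne_v0seq (h : Vmatch k m0 m1 T S) : S ≠ v0seq n k := by
  rintro rfl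
  exact not_hasStar_v0seq h.hasStar_snd

theorem exists_vmatch (hm0 : m0 + k + 1 ≤ n) (hm1u : m1 + 1 ≤ k) (hF : FaceSeq k S)
    (hv : S ≠ v0seq n k) : (∃ S', Vmatch k m0 m1 S S') ∨ ∃ T, Vmatch k m0 m1 T S := by
  have ht := ofType_typeOf (m0 := m0) (m1 := m1) hF hv
  rcases Nat.even_or_odd (typeOf k m0 m1 S) with heven | hodd
  · obtain ⟨t, htS⟩ : ∃ t, typeOf k m0 m1 S = t + 1 :=
      Nat.exists_eq_succ_of_ne_zero fun h0 => by rw [h0] at ht; exact ht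
    have hodd : Odd t := Nat.not_even_iff_odd.1 (Nat.even_add_one.1 (htS ▸ heven))
    obtain ⟨T, hT, htT, hR⟩ := exists_rule_of_even hm0 hF hodd (htS ▸ ht)
    exact Or.inr ⟨T, vmatch_iff.2 ⟨hT, t, hodd, htT, hR⟩⟩
  · obtain ⟨S', hR⟩ := exists_rule_of_odd (by omega) (by omega) hodd ht
    exact Or.inl ⟨S', vmatch_iff.2 ⟨hF, _, hodd, ht, hR⟩⟩

theorem existsUnique_vmatchE_none :
    ∃! pq : Option (FSeq n) × Option (FSeq n),
      VmatchE n k m0 m1 pq.1 pq.2 ∧ (none = pq.1 ∨ none = pq.2) := by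
  refine ⟨(none, some (v0seq n k)), ⟨rfl, Or.inl rfl⟩, ?_⟩
  rintro ⟨_ | p, _ | q⟩ ⟨h, hc⟩ <;> simp_all [VmatchE]

theorem existsUnique_vmatchE_v0seq :
    ∃! pq : Option (FSeq n) × Option (FSeq n),
      VmatchE n k m0 m1 pq.1 pq.2 ∧ (some (v0seq n k) = pq.1 ∨ some (v0seq n k) = pq.2) := by
  refine ⟨(none, some (v0seq n k)), ⟨rfl, Or.inr rfl⟩, ?_⟩
  rintro ⟨_ | p, _ | q⟩ ⟨h, hc⟩
  · exact h.elim
  · simp_all [VmatchE]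
  · exact h.elim
  · rcases hc with hc | hc <;> cases Option.some.inj hc
    exacts [(h.fst_ne_v0seq rfl).elim, (h.snd_ne_v0seq rfl).elim]

theorem existsUnique_vmatchE_of_ne_v0seq (hm0 : m0 + k + 1 ≤ n) (hm1u : m1 + 1 ≤ k)
    (hF : FaceSeq k S) (hv : S ≠ v0seq n k) :
    ∃! pq : Option (FSeq n) × Option (FSeq n),
      VmatchE n k m0 m1 pq.1 pq.2 ∧ (some S = pq.1 ∨ some S = pq.2) := by
  have hS : ∀ p q, VmatchE n k m0 m1 p q → (some S = p ∨ some S = q) →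
      ∃ a b, p = some a ∧ q = some b ∧ Vmatch k m0 m1 a b ∧ (S = a ∨ S = b) := by
    rintro (_ | a) (_ | b) h hc
    · exact h.elim
    · simp_all [VmatchE]
    · exact h.elim
    · exact ⟨a, b, rfl, rfl, h, by simpa using hc⟩
  rcases exists_vmatch hm0 hm1u hF hv with ⟨S', h⟩ | ⟨T, h⟩
  · refine ⟨(some S, some S'), ⟨h, Or.inl rfl⟩, fun ⟨p, q⟩ ⟨h', hc⟩ => ?_⟩
    obtain ⟨a, b, rfl, rfl, hab, rfl | rfl⟩ := hS p q h' hc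
    · rw [hab.right_unique hm1u h]
    · exact (h.not_vmatch_snd hm1u hab).elim
  · refine ⟨(some T, some S), ⟨h, Or.inr rfl⟩, fun ⟨p, q⟩ ⟨h', hc⟩ => ?_⟩
    obtain ⟨a, b, rfl, rfl, hab, rfl | rfl⟩ := hS p q h' hc
    · exact (hab.not_vmatch_snd hm1u h).elim
    · rw [hab.left_unique hm1u h]

end Matching

theorem matching_complete_general (n k m0 m1 : ℕ)
    (hm0 : m0 + k + 1 ≤ n) (hm1u : m1 + 1 ≤ k) :
    (∀ c : Option (FSeq n), (∀ S, c = some S → FaceSeq k S) →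
      ∃! pq : Option (FSeq n) × Option (FSeq n),
        VmatchE n k m0 m1 pq.1 pq.2 ∧ (c = pq.1 ∨ c = pq.2)) ∧
    (∀ S S' : FSeq n, Vmatch k m0 m1 S S' → Codim1 k S S') := by
  refine ⟨fun c hc => ?_, fun S S' h => h.codim1⟩
  rcases c with _ | S
  · exact existsUnique_vmatchE_none
  by_cases hv : S = v0seq n k
  · subst hv
    exact existsUnique_vmatchE_v0seq
  · exact existsUnique_vmatchE_of_ne_v0seq hm0 hm1u (hc S rfl) hv

/-- Every face sequence (and the empty face) appears in exactly one pair
of the matching `V`, and in every pair `(S, S')` of `V` the face `S` is a codimension-1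
face of `S'`; hence `V` is a complete matching. -/
theorem matching_complete (n k m0 m1 : ℕ) (hk1 : 1 ≤ k) (hk2 : k ≤ n - 1)
    (hm0 : m0 + k + 1 ≤ n) (hm1l : 1 ≤ m1) (hm1u : m1 + 1 ≤ k) :
    (∀ c : Option (FSeq n), (∀ S, c = some S → FaceSeq k S) →
      ∃! pq : Option (FSeq n) × Option (FSeq n),
        VmatchE n k m0 m1 pq.1 pq.2 ∧ (c = pq.1 ∨ c = pq.2)) ∧
    (∀ S S' : FSeq n, Vmatch k m0 m1 S S' → Codim1 k S S') :=
  matching_complete_general n k m0 m1 hm0 hm1u
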